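/- arXiv:1712.03760 — 2 statements merged into one kernel-verified Lean document; each statement's English description precedes it below -/
import Mathlib

section
/- For an n×n symmetric matrix S with independent entries s_{ij} = s_{ji} for i ≤ j, treating det S as a polynomial in the variables (s_{ik})_{i≤k}, one has for all 1 ≤ i, j ≤ n: ∑_{k=1}^n (1 + δ_{ik}) s_{jk} · ∂(det S)/∂s_{ik} = 2 δ_{ij} · det S, where ∂(det S)/∂s_{ik} with i > k is interpreted as ∂(det S)/∂s_{ki}. -/
/-!
Jacobi's formula `D (det M) = ∑ a b, adj(M) b a * D (M a b)` holds for every derivation `D`.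
The variable `s(i, k)` sits at the positions `(i, k)` and `(k, i)` of `S`, which coincide exactly
when `i = k`; as `adj S` is symmetric, the factor `1 + δ_{ik}` turns `∂(det S)/∂s_{ik}` into
`2 adj(S) k i`. Summing against `S j k` gives `2 (S * adj S) j i = 2 δ_{ij} det S`.
-/

open MvPolynomial Matrix

theorem Matrix.det_updateRow_eq_sum_adjugate_mul {n α : Type*} [Fintype n] [DecidableEq n]
    [CommRing α] (M : Matrix n n α) (r : n) (v : n → α) :
    (M.updateRow r v).det = ∑ c, M.adjugate c r * v c := by
  rw [← cramer_transpose_apply, cramer_eq_adjugate_mulVec, ← adjugate_transpose]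
  rfl

namespace Derivation

theorem leibniz_finset_prod {R A M : Type*} [CommSemiring R] [CommSemiring A] [AddCommMonoid M]
    [Algebra R A] [Module A M] [Module R M] (D : Derivation R A M) {ι : Type*} [DecidableEq ι]
    (s : Finset ι) (f : ι → A) :
    D (∏ a ∈ s, f a) = ∑ a ∈ s, (∏ b ∈ s.erase a, f b) • D (f a) := by
  induction s using Finset.induction_on with
  | empty => simp
  | @insert a s ha ih =>
    rw [Finset.prod_insert ha, leibniz, ih, Finset.sum_insert ha, Finset.erase_insert ha,
      Finset.smul_sum, add_comm]
    congr 1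
    refine Finset.sum_congr rfl fun b hb => ?_
    rw [Finset.erase_insert_of_ne (ne_of_mem_of_not_mem hb ha).symm,
      Finset.prod_insert fun h => ha (Finset.mem_of_mem_erase h), mul_smul]

variable {R A : Type*} [CommSemiring R] [CommRing A] [Algebra R A] (D : Derivation R A A)
  {n : Type*} [Fintype n] [DecidableEq n]

theorem map_det_eq_sum_det_updateRow (M : Matrix n n A) :
    D M.det = ∑ r, (M.updateRow r fun c => D (M r c)).det := by
  simp_rw [det_apply, map_sum, Units.smul_def, map_zsmul, leibniz_finset_prod]
  rw [Finset.sum_comm]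
  refine Finset.sum_congr rfl fun σ _ => ?_
  rw [Finset.smul_sum, ← Equiv.sum_comp σ (fun r => _ • ∏ i, _)]
  refine Finset.sum_congr rfl fun a _ => ?_
  rw [← Finset.mul_prod_erase _ _ (Finset.mem_univ a), updateRow_self, smul_eq_mul, mul_comm]
  congr 2
  refine Finset.prod_congr rfl fun b hb => ?_
  rw [updateRow_ne (σ.injective.ne (Finset.ne_of_mem_erase hb))]

theorem map_det_eq_sum_adjugate_mul (M : Matrix n n A) :
    D M.det = ∑ a, ∑ b, M.adjugate b a * D (M a b) := by
  simp_rw [D.map_det_eq_sum_det_updateRow, det_updateRow_eq_sum_adjugate_mul]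

end Derivation

namespace Sym2

variable {ι R : Type*} [DecidableEq ι] [Semiring R]

theorem one_add_ite_mul_ite_mk_eq (x : R) (a b i k : ι) :
    (1 + if i = k then 1 else 0) * (if s(a, b) = s(i, k) then x else 0) =
      (if a = i ∧ b = k then x else 0) + (if a = k ∧ b = i then x else 0) := by
  by_cases hik : i = k
  · subst hik
    simp only [Sym2.eq_iff, or_self, if_true]
    split_ifs <;> simp [one_add_one_eq_two, two_mul]
  · simp only [Sym2.eq_iff, hik, if_false, add_zero, one_mul, ite_or]
    grind

theorem one_add_ite_mul_sum_sum_ite_mk_eq [Fintype ι] (f : ι → ι → R)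
    (hf : ∀ a b, f a b = f b a) (i k : ι) :
    (1 + if i = k then 1 else 0) * ∑ a, ∑ b, (if s(a, b) = s(i, k) then f a b else 0) =
      2 * f i k := by
  simp_rw [Finset.mul_sum, one_add_ite_mul_ite_mk_eq, Finset.sum_add_distrib, ite_and]
  simp [hf k i, two_mul]

end Sym2

/-- Laplace-expansion identity for a symmetric `n × n` matrix whose independent
upper-triangular entries are polynomial variables (indexed by unordered pairs):
`∑ k, (1 + δ_{ik}) s_{jk} ∂(det S)/∂s_{ik} = 2 δ_{ij} det S`. -/
theorem laplace_expansion_symmetric_matrix (n : ℕ) (i j : Fin n) :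
    ∑ k : Fin n,
        ((1 : MvPolynomial (Sym2 (Fin n)) ℚ) + if i = k then 1 else 0) *
          X (Sym2.mk j k) *
          pderiv (Sym2.mk i k)
            (Matrix.det (Matrix.of fun a b : Fin n =>
              (X (Sym2.mk a b) : MvPolynomial (Sym2 (Fin n)) ℚ)))
      = 2 * (if i = j then (1 : MvPolynomial (Sym2 (Fin n)) ℚ) else 0) *
          Matrix.det (Matrix.of fun a b : Fin n =>
            (X (Sym2.mk a b) : MvPolynomial (Sym2 (Fin n)) ℚ)) := by
  set S : Matrix (Fin n) (Fin n) (MvPolynomial (Sym2 (Fin n)) ℚ) := of fun a b => X s(a, b)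
  have hS : S.IsSymm := ext fun a b => congrArg X Sym2.eq_swap
  have hderiv (k : Fin n) :
      (1 + if i = k then 1 else 0) * pderiv s(i, k) S.det = 2 * S.adjugate k i := by
    rw [Derivation.map_det_eq_sum_adjugate_mul]
    simp_rw [S, of_apply, pderiv_X, Pi.single_apply, mul_ite, mul_one, mul_zero]
    exact Sym2.one_add_ite_mul_sum_sum_ite_mk_eq (fun a b => S.adjugate b a)
      (fun a b => hS.adjugate.apply a b) i k
  calc _ = ∑ k, 2 * (S j k * S.adjugate k i) :=
        Finset.sum_congr rfl fun k _ => by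
          rw [mul_right_comm, hderiv, mul_comm, mul_left_comm]; rfl
    _ = 2 * (S * S.adjugate) j i := by rw [mul_apply, Finset.mul_sum]
    _ = _ := by rw [mul_adjugate, Matrix.smul_apply, one_apply, eq_comm]; simp [mul_comm, eq_comm]
end

section
/- Let S be the (E+L)×(E+L) Gram matrix of vectors v_1,…,v_{E+L} in an inner product space, and let F = det S. Writing the upper-left E×E block entries as λ_{ij} and the remaining independent entries (those x_{ij} with 1 ≤ i ≤ E < j ≤ E+L or E < i ≤ j ≤ E+L) as variables, the symmetric-matrix Laplace identity yields, for 1 ≤ i, j ≤ E: ∑_{k=1}^E (1+δ_{ik}) λ_{jk} (∂F/∂λ_{ik})_x = 2 δ_{ij} F − ∑_{q=E+1}^{E+L} x_{jq} ∂F/∂x_{iq}, where (∂F/∂λ_{ik})_x treats the x-variables as constants. (Note 1+δ_{iq} = 1 since q > E ≥ i.) -/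
/-!
Differentiating the Leibniz expansion of the determinant gives Jacobi's formula
`∂ det M = ∑_{a,r} adj(M)_{ar} ∂M_{ra}`. For the generic symmetric matrix the variable `s_{ik}`
occurs at the positions `(i,k)` and `(k,i)`, so `∂F/∂s_{ik} = (2 - δ_{ik}) adj(S)_{ik}`, and the
weight `1 + δ_{ik}` exactly cancels the factor `2 - δ_{ik}`. The left-hand side plus the
`x`-sum is therefore `2 (S · adj S)_{ji} = 2 δ_{ij} F`.
-/

open MvPolynomial Finset Matrix

theorem Derivation.leibniz_prod {R A M ι : Type*} [CommSemiring R] [CommSemiring A]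
    [AddCommMonoid M] [Algebra R A] [Module A M] [Module R M] [DecidableEq ι]
    (D : Derivation R A M) (s : Finset ι) (f : ι → A) :
    D (∏ i ∈ s, f i) = ∑ i ∈ s, (∏ j ∈ s.erase i, f j) • D (f i) := by
  induction s using Finset.induction with
  | empty => simp
  | insert a s ha ih =>
    rw [prod_insert ha, leibniz, ih, sum_insert ha, erase_insert ha, smul_sum, add_comm]
    congr 1
    refine sum_congr rfl fun i hi => ?_
    rw [erase_insert_of_ne (ne_of_mem_of_not_mem hi ha).symm, prod_insert (by simp [ha]),
      mul_smul]

theorem Derivation.leibniz_det {R A n : Type*} [CommSemiring R] [CommRing A] [Algebra R A]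
    [Fintype n] [DecidableEq n] (D : Derivation R A A) (M : Matrix n n A) :
    D M.det = ∑ a, ∑ r, M.adjugate a r * D (M r a) := by
  have hcol : ∀ σ : Equiv.Perm n, D (∏ i, M (σ i) i)
      = ∑ a, ∏ i, M.updateCol a (fun r => D (M r a)) (σ i) i := by
    intro σ
    rw [leibniz_prod]
    refine sum_congr rfl fun a _ => ?_
    rw [← mul_prod_erase _ _ (mem_univ a), smul_eq_mul, mul_comm]
    congr 1
    · simp
    · exact prod_congr rfl fun i hi => by simp [ne_of_mem_erase hi]
  calc D M.det = ∑ a, (M.updateCol a fun r => D (M r a)).det := by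
        simp only [det_apply, map_sum, Units.smul_def, map_zsmul, hcol, smul_sum]
        exact sum_comm
    _ = ∑ a, ∑ r, M.adjugate a r * D (M r a) := by
        simp only [← cramer_apply, cramer_eq_adjugate_mulVec, mulVec, dotProduct]

noncomputable def Matrix.genericSymm (n R : Type*) [CommSemiring R] :
    Matrix n n (MvPolynomial (Sym2 n) R) :=
  of fun a b => X s(a, b)

namespace Matrix.genericSymm

variable {n R : Type*} [CommRing R]

theorem isSymm : (genericSymm n R).IsSymm :=
  IsSymm.ext fun a b => by simp [genericSymm, Sym2.eq_swap]

theorem pderiv_apply [DecidableEq n] (i k a b : n) :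
    pderiv s(i, k) (genericSymm n R a b) = if s(a, b) = s(i, k) then 1 else 0 := by
  simp [genericSymm, pderiv_X, Pi.single_apply]

variable [Fintype n] [DecidableEq n]

theorem pderiv_det (i k : n) :
    pderiv s(i, k) (genericSymm n R).det
      = (if i = k then 1 else 2) * (genericSymm n R).adjugate i k := by
  rw [Derivation.leibniz_det]
  simp only [pderiv_apply, Sym2.eq_iff]
  split_ifs with hik
  · subst hik
    simp [ite_and, sum_ite_eq']
  · have hsplit : ∀ a r : n,
        (if r = i ∧ a = k ∨ r = k ∧ a = i then (1 : MvPolynomial (Sym2 n) R) else 0)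
          = (if r = i ∧ a = k then 1 else 0) + (if r = k ∧ a = i then 1 else 0) := by
      intro a r
      split_ifs <;> grind
    simp only [hsplit, mul_add, sum_add_distrib, mul_ite, mul_one, mul_zero, ite_and,
      sum_ite_eq', mem_univ, if_true, isSymm.adjugate.apply i k]
    ring

theorem sum_mul_pderiv_det (i j : n) :
    ∑ k, (1 + if i = k then 1 else 0) * genericSymm n R j k *
        pderiv s(i, k) (genericSymm n R).det
      = 2 * (if i = j then 1 else 0) * (genericSymm n R).det := by
  have hweight : ∀ k,
      ((1 : MvPolynomial (Sym2 n) R) + if i = k then 1 else 0) * (if i = k then 1 else 2) = 2 := by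
    intro k
    split_ifs <;> norm_num
  calc _ = 2 * (genericSymm n R * (genericSymm n R).adjugate) j i := by
        simp only [pderiv_det, mul_apply, mul_sum, isSymm.adjugate.apply i]
        refine sum_congr rfl fun k _ => ?_
        linear_combination genericSymm n R j k * (genericSymm n R).adjugate i k * hweight k
    _ = _ := by
        simp only [mul_adjugate, smul_apply, one_apply, smul_eq_mul, eq_comm (a := j)]
        ring

end Matrix.genericSymm

/-- The symmetric-matrix Laplace identity for the Baikov Gram matrix: writing
`F = det S` for the symmetric `(E+L) × (E+L)` matrix of independent variables,
with external block entries `λ_{ij}` (`i, j ≤ E`) and loop-dependent entries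
`x_{iq}`, one has for `1 ≤ i, j ≤ E`:
`∑_k (1+δ_{ik}) λ_{jk} (∂F/∂λ_{ik})_x = 2 δ_{ij} F − ∑_q x_{jq} ∂F/∂x_{iq}`. -/
theorem laplace_identity_baikov_gram (E L : ℕ) (i j : Fin E) :
    ∑ k : Fin E,
        ((1 : MvPolynomial (Sym2 (Fin (E + L))) ℚ) + if i = k then 1 else 0) *
          X (Sym2.mk (Fin.castAdd L j) (Fin.castAdd L k)) *
          pderiv (Sym2.mk (Fin.castAdd L i) (Fin.castAdd L k))
            (Matrix.det (Matrix.of fun a b : Fin (E + L) =>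
              (X (Sym2.mk a b) : MvPolynomial (Sym2 (Fin (E + L))) ℚ)))
      = 2 * (if i = j then (1 : MvPolynomial (Sym2 (Fin (E + L))) ℚ) else 0) *
          Matrix.det (Matrix.of fun a b : Fin (E + L) =>
            (X (Sym2.mk a b) : MvPolynomial (Sym2 (Fin (E + L))) ℚ))
        - ∑ q : Fin L,
            X (Sym2.mk (Fin.castAdd L j) (Fin.natAdd E q)) *
              pderiv (Sym2.mk (Fin.castAdd L i) (Fin.natAdd E q))
                (Matrix.det (Matrix.of fun a b : Fin (E + L) =>
                  (X (Sym2.mk a b) : MvPolynomial (Sym2 (Fin (E + L))) ℚ))) := by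
  have hne : ∀ q : Fin L, Fin.castAdd L i ≠ Fin.natAdd E q :=
    fun q => Fin.ne_of_lt (Fin.lt_def.mpr (by simp only [Fin.val_castAdd, Fin.val_natAdd]; omega))
  have h := genericSymm.sum_mul_pderiv_det (R := ℚ) (Fin.castAdd L i) (Fin.castAdd L j)
  rw [Fin.sum_univ_add] at h
  simp only [Fin.castAdd_inj, hne, if_false, add_zero, one_mul, genericSymm, of_apply] at h
  rw [eq_sub_iff_add_eq]
  exact h
end
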